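/- Let n, t, m be positive natural numbers, ε > 0 and δ ∈ (0, 1), set ρ = (√(log(1/δ) + ε) − √(log(1/δ)))², and let β : ℕ → Fin m be a binning function. Let U be a finite subset of Fin n (the set of users), let k ∈ U, and let U' = U.erase k (node-neighboring). For each week j : Fin t let d j : Fin n → ℕ give the ARP degree of each user in week j. Define H : Fin t → Fin m → ℝ and H' : Fin t → Fin m → ℝ by H j b = card {u ∈ U | β (d j u) = b} and H' j b = card {u ∈ U' | β (d j u) = b}. Let G be the product measure on Fin t → Fin m → ℝ whose t·m coordinates are i.i.d. Gaussian with mean 0 and variance t/(2ρ), and let P : (Fin t → Fin m → ℝ) → (Fin t → Fin m → ℝ) be any measurable function (the threshold-at-zero-then-round post-processing applied to every bin). Then the pushforward of G under y ↦ P(H + y) and the pushforward of G under y ↦ P(H' + y) are (ε, δ)-indistinguishable. (The histogram-based-δ approach satisfies (ε, δ)-node-differential privacy.) -/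

import Mathlib

open MeasureTheory ProbabilityTheory Real

/-- Measures `μ` and `ν` are `(ε, δ)`-indistinguishable if for every measurable set `S`,
`μ S ≤ exp ε * ν S + δ`. -/
def Indist {X : Type*} [MeasurableSpace X] (μ ν : Measure X) (ε δ : ℝ) : Prop :=
  ∀ S : Set X, MeasurableSet S →
    μ S ≤ ENNReal.ofReal (Real.exp ε) * ν S + ENNReal.ofReal δ

/-- The weekly degree histogram: for week `j` and bin `b`, the number of users in `U`
whose degree in week `j` falls into bin `b` under the binning function `β`. -/
def degreeHistogram {n t m : ℕ} (β : ℕ → Fin m) (U : Finset (Fin n))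
    (d : Fin t → Fin n → ℕ) : Fin t → Fin m → ℝ :=
  fun j b => ((U.filter fun u => β (d j u) = b).card : ℝ)

open scoped ENNReal NNReal

/-!
Removing user `k` changes every weekly histogram by one in exactly one bin, so the two releases
differ by a shift `v` of the Gaussian noise with `‖v‖² = t`. Completing the square, the shifted
noise has density `exp (⟪v, z⟫ / V - ‖v‖² / (2V))` with respect to the unshifted one. This
density exceeds `e^ε` exactly where the unshifted noise satisfies `⟪v, z⟫ > Vε - ‖v‖² / 2`, and
a Chernoff bound gives this event probability at most
`exp (-(Vε - t/2)² / (2Vt)) = exp (-(ε - ρ)² / (4ρ))` for `V = t / (2ρ)`, which the choice of `ρ`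
makes equal to `δ`. Post-processing by `P` preserves indistinguishability.
-/

namespace Indist

variable {X Y : Type*} [MeasurableSpace X] [MeasurableSpace Y] {ε δ : ℝ}

theorem map {μ ν : Measure X} (h : Indist μ ν ε δ) {f : X → Y} (hf : Measurable f) :
    Indist (μ.map f) (ν.map f) ε δ := fun S hS => by
  simpa only [Measure.map_apply hf hS] using h _ (hf hS)

theorem withDensity_of_measure_lt_le {ν : Measure X} {r : X → ℝ≥0∞} (hr : Measurable r)
    (h : ν.withDensity r {x | ENNReal.ofReal (exp ε) < r x} ≤ ENNReal.ofReal δ) :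
    Indist (ν.withDensity r) ν ε δ := by
  intro S hS
  set E := {x | r x ≤ ENNReal.ofReal (exp ε)}
  have hE : MeasurableSet E := measurableSet_le hr measurable_const
  have hgood : ν.withDensity r (S ∩ E) ≤ ENNReal.ofReal (exp ε) * ν S := calc
    ν.withDensity r (S ∩ E) = ∫⁻ x in S ∩ E, r x ∂ν := withDensity_apply r (hS.inter hE)
    _ ≤ ∫⁻ _ in S ∩ E, ENNReal.ofReal (exp ε) ∂ν :=
      setLIntegral_mono measurable_const fun x hx => hx.2
    _ ≤ ENNReal.ofReal (exp ε) * ν S := by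
      rw [setLIntegral_const]
      gcongr
      exact Set.inter_subset_left
  have hbad : ν.withDensity r Eᶜ ≤ ENNReal.ofReal δ := by
    simpa only [E, Set.compl_ofPred, not_le] using h
  calc ν.withDensity r S ≤ ν.withDensity r (S ∩ E) + ν.withDensity r (S \ E) :=
        measure_le_inter_add_sdiff _ _ _
    _ ≤ ENNReal.ofReal (exp ε) * ν S + ENNReal.ofReal δ :=
        add_le_add hgood ((measure_mono (Set.sdiff_subset_compl _ _)).trans hbad)

end Indist

section Pi

variable {ι : Type*} [Fintype ι] {E : ι → Type*} [∀ i, MeasurableSpace (E i)]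
  (μ : ∀ i, Measure (E i)) [∀ i, IsProbabilityMeasure (μ i)]

theorem lintegral_fintype_prod_eq_prod {f : ∀ i, E i → ℝ≥0∞} (hf : ∀ i, Measurable (f i)) :
    ∫⁻ x, ∏ i, f i (x i) ∂Measure.pi μ = ∏ i, ∫⁻ y, f i y ∂μ i := by
  rw [lintegral_prod_eq_prod_lintegral_of_indepFun _ _
    (iIndepFun_pi fun i => (hf i).aemeasurable) fun i => (hf i).comp (measurable_pi_apply i)]
  exact Finset.prod_congr rfl fun i _ => (measurePreserving_eval μ i).lintegral_comp (hf i)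

theorem MeasureTheory.Measure.pi_withDensity {f : ∀ i, E i → ℝ≥0∞} (hf : ∀ i, Measurable (f i))
    [∀ i, SigmaFinite ((μ i).withDensity (f i))] :
    Measure.pi (fun i => (μ i).withDensity (f i))
      = (Measure.pi μ).withDensity fun x => ∏ i, f i (x i) := by
  refine Measure.pi_eq fun s hs => ?_
  have hbox : (Set.univ.pi s).indicator (fun x => ∏ i, f i (x i))
      = fun x => ∏ i, (s i).indicator (f i) (x i) := by
    ext x
    classical
    simp only [Set.indicator_apply, Set.mem_pi, Set.mem_univ, forall_const,
      Finset.prod_ite_zero, Finset.mem_univ]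
  rw [withDensity_apply _ (.univ_pi hs), ← lintegral_indicator (.univ_pi hs), hbox,
    lintegral_fintype_prod_eq_prod μ fun i => (hf i).indicator (hs i)]
  exact Finset.prod_congr rfl fun i _ => by
    rw [withDensity_apply _ (hs i), lintegral_indicator (hs i)]

end Pi

section Gaussian

variable {V : ℝ≥0}

theorem gaussianReal_eq_withDensity (hV : V ≠ 0) (c : ℝ) :
    gaussianReal c V = (gaussianReal 0 V).withDensity
      fun x => ENNReal.ofReal (exp (c * x / V - c ^ 2 / (2 * V))) := by
  have hV' : (V : ℝ) ≠ 0 := mod_cast hV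
  rw [gaussianReal_of_var_ne_zero _ hV, gaussianReal_of_var_ne_zero _ hV,
    ← withDensity_mul _ (measurable_gaussianPDF _ _) (by fun_prop)]
  congr 1
  ext x
  simp only [Pi.mul_apply, gaussianPDF]
  rw [← ENNReal.ofReal_mul (gaussianPDFReal_nonneg _ _ _)]
  simp only [gaussianPDFReal, sub_zero]
  rw [mul_assoc _ (exp _), ← exp_add]
  congr 3
  field_simp
  ring

variable {ι : Type*} [Fintype ι]

theorem pi_gaussianReal_map_add_eq_withDensity (hV : V ≠ 0) (v : ι → ℝ) :
    (Measure.pi fun _ : ι => gaussianReal 0 V).map (v + ·)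
      = (Measure.pi fun _ => gaussianReal 0 V).withDensity fun z =>
          ENNReal.ofReal (exp ((∑ i, v i * z i) / V - (∑ i, v i ^ 2) / (2 * V))) := by
  have hshift := measurePreserving_pi (fun _ : ι => gaussianReal 0 V)
    (fun i => gaussianReal (v i) V) fun i =>
      ⟨measurable_const_add (v i), by rw [gaussianReal_map_const_add, zero_add]⟩
  rw [show (v + ·) = fun z i => v i + z i from rfl, hshift.map_eq,
    funext fun i => gaussianReal_eq_withDensity hV (v i),
    Measure.pi_withDensity _ fun i => by fun_prop]
  congr 1
  ext z
  rw [← ENNReal.ofReal_prod_of_nonneg fun i _ => (exp_pos _).le, ← exp_sum,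
    Finset.sum_sub_distrib, ← Finset.sum_div, ← Finset.sum_div]

theorem lintegral_exp_sum_mul_pi_gaussianReal (hV : V ≠ 0) (v : ι → ℝ) :
    ∫⁻ z, ENNReal.ofReal (exp (∑ i, v i * z i)) ∂(Measure.pi fun _ : ι => gaussianReal 0 V)
      = ENNReal.ofReal (exp (V * (∑ i, v i ^ 2) / 2)) := by
  have hV' : (V : ℝ) ≠ 0 := mod_cast hV
  -- the shift by `V • v` is a probability measure, so its density has integral `1`
  have hmass := congrArg (· Set.univ) (pi_gaussianReal_map_add_eq_withDensity hV fun i => V * v i)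
  simp only [Measure.map_apply (measurable_const_add _) .univ, Set.preimage_univ, measure_univ,
    withDensity_apply _ .univ, Measure.restrict_univ] at hmass
  have hexp : ∀ z : ι → ℝ, ∑ i, v i * z i = ((∑ i, V * v i * z i) / V
      - (∑ i, (V * v i) ^ 2) / (2 * V)) + V * (∑ i, v i ^ 2) / 2 := fun z => by
    simp only [mul_assoc, mul_pow, ← Finset.mul_sum]
    field_simp
    ring
  simp only [hexp, exp_add, ENNReal.ofReal_mul (exp_pos _).le]
  rw [lintegral_mul_const _ (by fun_prop), ← hmass, one_mul]

theorem pi_gaussianReal_tail_le (hV : V ≠ 0) (v : ι → ℝ) {a : ℝ} (ha : 0 ≤ a) :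
    (Measure.pi fun _ : ι => gaussianReal 0 V) {z | a < ∑ i, v i * z i}
      ≤ ENNReal.ofReal (exp (-a ^ 2 / (2 * V * ∑ i, v i ^ 2))) := by
  set s := ∑ i, v i ^ 2
  set lam := a / (V * s)
  have hlam : 0 ≤ lam := by positivity
  have hmarkov : ENNReal.ofReal (exp (lam * a)) * (Measure.pi fun _ : ι => gaussianReal 0 V)
      {z | a < ∑ i, v i * z i} ≤ ENNReal.ofReal (exp (V * (∑ i, (lam * v i) ^ 2) / 2)) := calc
    _ ≤ ENNReal.ofReal (exp (lam * a)) * (Measure.pi fun _ : ι => gaussianReal 0 V)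
        {z | ENNReal.ofReal (exp (lam * a)) ≤ ENNReal.ofReal (exp (∑ i, lam * v i * z i))} := by
      gcongr with z
      intro hz
      simp only [mul_assoc, ← Finset.mul_sum]
      gcongr
    _ ≤ ∫⁻ z, ENNReal.ofReal (exp (∑ i, lam * v i * z i))
        ∂(Measure.pi fun _ : ι => gaussianReal 0 V) :=
      mul_meas_ge_le_lintegral₀ (Measurable.aemeasurable (by fun_prop)) _
    _ = _ := lintegral_exp_sum_mul_pi_gaussianReal hV _
  have hexp : ENNReal.ofReal (exp (lam * a)) * ENNReal.ofReal (exp (-a ^ 2 / (2 * V * s)))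
      = ENNReal.ofReal (exp (V * (∑ i, (lam * v i) ^ 2) / 2)) := by
    have hsum : ∑ i, (lam * v i) ^ 2 = lam ^ 2 * s := by simp only [mul_pow, ← Finset.mul_sum, s]
    rw [← ENNReal.ofReal_mul (exp_pos _).le, ← exp_add, hsum]
    rcases eq_or_ne s 0 with hs | hs
    · simp [lam, hs]
    · have hV' : (V : ℝ) ≠ 0 := mod_cast hV
      congr 2
      simp only [lam]
      field_simp
      ring
  exact (ENNReal.mul_le_mul_iff_right (by positivity) ENNReal.ofReal_ne_top).1
    (hmarkov.trans_eq hexp.symm)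

theorem Indist.pi_gaussianReal_map_add (hV : V ≠ 0) (v : ι → ℝ) {ε : ℝ}
    (hε : (∑ i, v i ^ 2) / 2 ≤ V * ε) :
    Indist ((Measure.pi fun _ : ι => gaussianReal 0 V).map (v + ·))
      (Measure.pi fun _ => gaussianReal 0 V) ε
      (exp (-(V * ε - (∑ i, v i ^ 2) / 2) ^ 2 / (2 * V * ∑ i, v i ^ 2))) := by
  have hV0 : (0 : ℝ) < V := NNReal.coe_pos.2 (pos_iff_ne_zero.2 hV)
  have hCM := pi_gaussianReal_map_add_eq_withDensity hV v
  rw [hCM]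
  refine Indist.withDensity_of_measure_lt_le (by fun_prop) ?_
  rw [← hCM, Measure.map_apply (measurable_const_add v)
    (measurableSet_lt measurable_const (by fun_prop))]
  have hloss : (v + ·) ⁻¹' {z | ENNReal.ofReal (exp ε) < ENNReal.ofReal
        (exp ((∑ i, v i * z i) / V - (∑ i, v i ^ 2) / (2 * V)))}
      = {z | V * ε - (∑ i, v i ^ 2) / 2 < ∑ i, v i * z i} := by
    ext z
    simp only [Set.mem_preimage, Set.mem_ofPred_eq, Pi.add_apply, ENNReal.ofReal_lt_ofReal_iff
      (exp_pos _), exp_lt_exp, mul_add, Finset.sum_add_distrib, ← sq]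
    rw [div_sub_div _ _ hV0.ne' (by positivity), lt_div_iff₀ (by positivity)]
    constructor <;> intro h <;> nlinarith
  rw [hloss]
  exact pi_gaussianReal_tail_le hV v (by linarith)

end Gaussian

theorem Indist.pi_pi_gaussianReal_map_add {κ ι : Type*} [Fintype κ] [Fintype ι]
    (v : κ → ι → ℝ) {s ρ ε : ℝ} (hs : ∑ j, ∑ i, v j i ^ 2 = s) (hs0 : 0 < s) (hρ : 0 < ρ)
    (hρε : ρ ≤ ε) :
    Indist ((Measure.pi fun _ : κ => Measure.pi fun _ : ι =>
        gaussianReal 0 (s / (2 * ρ)).toNNReal).map (v + ·))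
      (Measure.pi fun _ => Measure.pi fun _ => gaussianReal 0 (s / (2 * ρ)).toNNReal) ε
      (exp (-(ε - ρ) ^ 2 / (4 * ρ))) := by
  set V := (s / (2 * ρ)).toNNReal
  have hV : (V : ℝ) = s / (2 * ρ) := coe_toNNReal _ (by positivity)
  have hV0 : V ≠ 0 := by
    rw [← NNReal.coe_ne_zero, hV]
    positivity
  have hexp : -(V * ε - s / 2) ^ 2 / (2 * V * s) = -(ε - ρ) ^ 2 / (4 * ρ) := by
    rw [hV]
    field_simp
    ring
  have hflat := Indist.pi_gaussianReal_map_add hV0 (fun p : κ × ι => v p.1 p.2) (ε := ε) (by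
    rw [Fintype.sum_prod_type, hs, hV, div_mul_eq_mul_div, le_div_iff₀ (by positivity)]
    nlinarith)
  rw [Fintype.sum_prod_type, hs, hexp] at hflat
  have hcurry : (Measure.pi fun _ : κ × ι => gaussianReal 0 V).map (MeasurableEquiv.curry κ ι ℝ)
      = Measure.pi fun _ => Measure.pi fun _ => gaussianReal 0 V := by
    simpa only [Measure.infinitePi_eq_pi] using
      Measure.infinitePi_map_curry (ι := κ) (κ := ι) fun _ _ => gaussianReal 0 V
  have h := hflat.map (MeasurableEquiv.curry κ ι ℝ).measurable
  rwa [Measure.map_map (MeasurableEquiv.curry κ ι ℝ).measurable (measurable_const_add _),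
    show ⇑(MeasurableEquiv.curry κ ι ℝ) ∘ (fun y => (fun p : κ × ι => v p.1 p.2) + y)
      = (v + ·) ∘ MeasurableEquiv.curry κ ι ℝ from rfl,
    ← Measure.map_map (measurable_const_add _) (MeasurableEquiv.curry κ ι ℝ).measurable,
    hcurry] at h

theorem sub_sqrt_add_sub_sqrt_sq {c ε : ℝ} (hc : 0 ≤ c) (hcε : 0 ≤ c + ε) :
    ε - (√(c + ε) - √c) ^ 2 = 2 * √c * (√(c + ε) - √c) := by
  have h1 := sq_sqrt hc
  have h2 := sq_sqrt hcε
  nlinarith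

theorem degreeHistogram_eq_erase_add {n t m : ℕ} (β : ℕ → Fin m) {U : Finset (Fin n)}
    {k : Fin n} (hk : k ∈ U) (d : Fin t → Fin n → ℕ) :
    degreeHistogram β U d
      = degreeHistogram β (U.erase k) d + fun j => Pi.single (β (d j k)) 1 := by
  ext j b
  simp only [degreeHistogram, Pi.add_apply, Finset.filter_erase]
  by_cases hb : β (d j k) = b
  · subst hb
    rw [Pi.single_eq_same, ← Finset.card_erase_add_one
      (s := U.filter fun u => β (d j u) = β (d j k)) (Finset.mem_filter.2 ⟨hk, rfl⟩)]
    push_cast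
    ring
  · rw [Pi.single_eq_of_ne (Ne.symm hb), add_zero,
      Finset.erase_eq_of_notMem (s := U.filter fun u => β (d j u) = b)
        fun h => hb (Finset.mem_filter.1 h).2]

theorem histogram_delta_approach_node_dp_general (n t m : ℕ) (ht : 0 < t)
    (ε δ : ℝ) (hε : 0 < ε) (hδ₀ : 0 < δ) (hδ₁ : δ < 1) (ρ : ℝ)
    (hρ : ρ = (Real.sqrt (Real.log (1 / δ) + ε) - Real.sqrt (Real.log (1 / δ))) ^ 2)
    (β : ℕ → Fin m) (U : Finset (Fin n)) (k : Fin n) (hk : k ∈ U)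
    (d : Fin t → Fin n → ℕ)
    (P : (Fin t → Fin m → ℝ) → (Fin t → Fin m → ℝ)) (hP : Measurable P) :
    Indist
      (Measure.map (fun y => P (degreeHistogram β U d + y))
        (Measure.pi fun _ : Fin t => Measure.pi fun _ : Fin m =>
          gaussianReal 0 (((t : ℝ) / (2 * ρ)).toNNReal)))
      (Measure.map (fun y => P (degreeHistogram β (U.erase k) d + y))
        (Measure.pi fun _ : Fin t => Measure.pi fun _ : Fin m =>
          gaussianReal 0 (((t : ℝ) / (2 * ρ)).toNNReal)))
      ε δ := by
  set c := log (1 / δ)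
  have hc : 0 ≤ c := log_nonneg (one_le_one_div hδ₀ hδ₁.le)
  have hερ : ε - ρ = 2 * √c * (√(c + ε) - √c) := hρ ▸ sub_sqrt_add_sub_sqrt_sq hc (by linarith)
  have hρε : ρ ≤ ε := by nlinarith [sqrt_nonneg c, sqrt_le_sqrt (show c ≤ c + ε by linarith)]
  have hρ0 : 0 < ρ := hρ ▸ pow_pos (sub_pos.2 (sqrt_lt_sqrt hc (by linarith))) 2
  have hδ : exp (-(ε - ρ) ^ 2 / (4 * ρ)) = δ := by
    have hsq : (ε - ρ) ^ 2 = 4 * c * ρ := by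
      rw [hερ, hρ, mul_pow, mul_pow, sq_sqrt hc]
      ring
    rw [hsq, show -(4 * c * ρ) / (4 * ρ) = log δ by field_simp; norm_num [c], exp_log hδ₀]
  set v : Fin t → Fin m → ℝ := fun j => Pi.single (β (d j k)) 1
  have hv : ∑ j, ∑ b, v j b ^ 2 = t := by simp [v, Pi.single_apply]
  have hpost := (Indist.pi_pi_gaussianReal_map_add v hv (by positivity) hρ0 hρε).map
    (f := fun y => P (degreeHistogram β (U.erase k) d + y)) (by fun_prop)
  rw [hδ, Measure.map_map (by fun_prop) (by fun_prop)] at hpost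
  rw [degreeHistogram_eq_erase_add β hk d]
  convert hpost using 2
  exact funext fun y => congrArg P (add_assoc _ _ _)

/-- The histogram-based-δ approach satisfies `(ε, δ)`-node-differential privacy: on
node-neighboring user sets (one user removed), releasing the weekly degree histograms
perturbed by i.i.d. Gaussian noise of mean `0` and variance `t/(2ρ)` in every bin, where
`ρ = (√(log(1/δ) + ε) − √(log(1/δ)))²`, followed by any measurable post-processing `P`,
is `(ε, δ)`-indistinguishable. -/
theorem histogram_delta_approach_node_dp (n t m : ℕ) (hn : 0 < n) (ht : 0 < t) (hm : 0 < m)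
    (ε δ : ℝ) (hε : 0 < ε) (hδ₀ : 0 < δ) (hδ₁ : δ < 1) (ρ : ℝ)
    (hρ : ρ = (Real.sqrt (Real.log (1 / δ) + ε) - Real.sqrt (Real.log (1 / δ))) ^ 2)
    (β : ℕ → Fin m) (U : Finset (Fin n)) (k : Fin n) (hk : k ∈ U)
    (d : Fin t → Fin n → ℕ)
    (P : (Fin t → Fin m → ℝ) → (Fin t → Fin m → ℝ)) (hP : Measurable P) :
    Indist
      (Measure.map (fun y => P (degreeHistogram β U d + y))
        (Measure.pi fun _ : Fin t => Measure.pi fun _ : Fin m =>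
          gaussianReal 0 (((t : ℝ) / (2 * ρ)).toNNReal)))
      (Measure.map (fun y => P (degreeHistogram β (U.erase k) d + y))
        (Measure.pi fun _ : Fin t => Measure.pi fun _ : Fin m =>
          gaussianReal 0 (((t : ℝ) / (2 * ρ)).toNNReal)))
      ε δ :=
  histogram_delta_approach_node_dp_general n t m ht ε δ hε hδ₀ hδ₁ ρ hρ β U k hk d P hP
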